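/- arXiv:2005.02767 — 4 statements merged into one kernel-verified Lean document; each statement's English description precedes it below -/
import Mathlib

section
/- Let M₀, M₁ : Matrix (Fin n) (Fin n) ℝ with M₀ symmetric and invertible, let N₀, N₁ : Matrix (Fin n) (Fin q) ℝ, z : Fin q → ℝ, and let Σ : Matrix (Fin n) (Fin n) ℝ be positive definite. Set V̄ = −M₀⁻¹·(N₀·z), so that M₀·V̄ + N₀·z = 0. Let μ : ℝ and suppose M_μ := M₀ + μ·M₁ is symmetric and invertible; set V_μ = −M_μ⁻¹·((N₀ + μ·N₁)·z). Let (Ω, P) be a probability space and U : Ω → (Fin n → ℝ) a random vector with integrable components and pairwise products, mean V̄, and covariance matrix Σ. Then E[(U − V_μ)ᵀ Σ⁻¹ (U − V_μ)] = μ² · (M₁·V̄ + N₁·z)ᵀ (M_μᵀ Σ M_μ)⁻¹ (M₁·V̄ + N₁·z) + n. In particular E[(U − V_μ)ᵀ Σ⁻¹ (U − V_μ)] ≥ n, with equality when μ = 0. -/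
/-!
Expanding the quadratic form around the mean, the expected Mahalanobis loss of a random vector
with mean `V̄` and covariance `Σ` about a point `V` is `tr(Σ⁻¹Σ) + (V̄ - V)ᵀ Σ⁻¹ (V̄ - V)`,
i.e. `n` plus a nonnegative bias term. Subtracting the stationarity equations gives
`M_μ (V̄ - V_μ) = μ (M₁ V̄ + N₁ z)`, so the bias term is
`μ² (M₁ V̄ + N₁ z)ᵀ (M_μᵀ Σ M_μ)⁻¹ (M₁ V̄ + N₁ z)` when `M_μ` is symmetric.
-/

open Matrix MeasureTheory

section LinearAlgebra

variable {ι κ R : Type*} [Fintype ι]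

theorem dotProduct_mulVec_eq_sum_sum [CommSemiring R] (A : Matrix ι ι R) (x : ι → R) :
    x ⬝ᵥ A *ᵥ x = ∑ i, ∑ j, A i j * (x i * x j) := by
  simp only [dotProduct, mulVec, Finset.mul_sum]
  exact Finset.sum_congr rfl fun i _ => Finset.sum_congr rfl fun j _ => by ring

theorem smul_dotProduct_mulVec_smul [CommSemiring R] (A : Matrix ι ι R) (a : R) (x : ι → R) :
    (a • x) ⬝ᵥ A *ᵥ (a • x) = a ^ 2 * (x ⬝ᵥ A *ᵥ x) := by
  rw [mulVec_smul, smul_dotProduct, dotProduct_smul, smul_eq_mul, smul_eq_mul]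
  ring

variable [DecidableEq ι] [CommRing R]

theorem add_inv_mulVec_eq_smul_of_stationary [Fintype κ] {M₀ M₁ : Matrix ι ι R}
    {N₀ N₁ : Matrix ι κ R} {z : κ → R} {v : ι → R} (hv : M₀ *ᵥ v + N₀ *ᵥ z = 0) (μ : R)
    (hinv : IsUnit (M₀ + μ • M₁).det) :
    v + (M₀ + μ • M₁)⁻¹ *ᵥ ((N₀ + μ • N₁) *ᵥ z) = μ • (M₀ + μ • M₁)⁻¹ *ᵥ (M₁ *ᵥ v + N₁ *ᵥ z) :=
  calc v + (M₀ + μ • M₁)⁻¹ *ᵥ ((N₀ + μ • N₁) *ᵥ z)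
      = (M₀ + μ • M₁)⁻¹ *ᵥ ((M₀ + μ • M₁) *ᵥ v + (N₀ + μ • N₁) *ᵥ z) := by
        rw [mulVec_add, mulVec_mulVec v, nonsing_inv_mul _ hinv, one_mulVec]
    _ = (M₀ + μ • M₁)⁻¹ *ᵥ (μ • (M₁ *ᵥ v + N₁ *ᵥ z)) := by
        simp only [add_mulVec, smul_mulVec]
        congr 1
        linear_combination (norm := module) hv
    _ = μ • (M₀ + μ • M₁)⁻¹ *ᵥ (M₁ *ᵥ v + N₁ *ᵥ z) := mulVec_smul _ _ _

theorem dotProduct_inv_conj_mulVec (M S : Matrix ι ι R) (w : ι → R) :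
    w ⬝ᵥ (Mᵀ * S * M)⁻¹ *ᵥ w = (M⁻¹ᵀ *ᵥ w) ⬝ᵥ S⁻¹ *ᵥ (M⁻¹ᵀ *ᵥ w) := by
  rw [Matrix.mul_inv_rev, Matrix.mul_inv_rev, ← transpose_nonsing_inv, ← mulVec_mulVec,
    ← mulVec_mulVec, dotProduct_mulVec, ← mulVec_transpose]

end LinearAlgebra

section Moments

variable {ι Ω : Type*} [MeasurableSpace Ω] {P : Measure Ω} {U : Ω → ι → ℝ} {m : ι → ℝ}
  {S : Matrix ι ι ℝ}

theorem integrable_sub_mul_sub [IsFiniteMeasure P] (hint : ∀ i, Integrable (fun ω => U ω i) P)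
    (hint2 : ∀ i j, Integrable (fun ω => U ω i * U ω j) P) (i j : ι) (a b : ℝ) :
    Integrable (fun ω => (U ω i - a) * (U ω j - b)) P := by
  have hexpand : (fun ω => (U ω i - a) * (U ω j - b)) =
      fun ω => U ω i * U ω j - b * U ω i - a * U ω j + a * b := by
    funext ω; ring
  rw [hexpand]
  exact (((hint2 i j).sub ((hint i).const_mul b)).sub ((hint j).const_mul a)).add
    (integrable_const _)

theorem integral_sub_mul_sub [IsProbabilityMeasure P]
    (hint : ∀ i, Integrable (fun ω => U ω i) P)
    (hint2 : ∀ i j, Integrable (fun ω => U ω i * U ω j) P)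
    (hmean : ∀ i, ∫ ω, U ω i ∂P = m i)
    (hcov : ∀ i j, ∫ ω, (U ω i - m i) * (U ω j - m j) ∂P = S i j) (c : ι → ℝ) (i j : ι) :
    ∫ ω, (U ω i - c i) * (U ω j - c j) ∂P = S i j + (m i - c i) * (m j - c j) := by
  have hcentered : ∀ k, ∫ ω, (U ω k - m k) ∂P = 0 := fun k => by
    rw [integral_sub (hint k) (integrable_const _), hmean, integral_const, probReal_univ,
      one_smul, sub_self]
  have hint1 : ∀ k, Integrable (fun ω => U ω k - m k) P := fun k =>
    (hint k).sub (integrable_const _)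
  have hprod := integrable_sub_mul_sub hint hint2 i j (m i) (m j)
  have hexpand : (fun ω => (U ω i - c i) * (U ω j - c j)) = fun ω =>
      (U ω i - m i) * (U ω j - m j) + (m j - c j) * (U ω i - m i)
        + (m i - c i) * (U ω j - m j) + (m i - c i) * (m j - c j) := by
    funext ω; ring
  rw [hexpand, integral_add _ (integrable_const _), integral_add _ ((hint1 j).const_mul _),
    integral_add hprod ((hint1 i).const_mul _),
    integral_const_mul, integral_const_mul, hcentered, hcentered, hcov, integral_const,
    probReal_univ, one_smul]
  · ring
  · exact hprod.add ((hint1 i).const_mul _)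
  · exact (hprod.add ((hint1 i).const_mul _)).add ((hint1 j).const_mul _)

theorem integral_dotProduct_mulVec_sub [Fintype ι] [IsProbabilityMeasure P]
    (hint : ∀ i, Integrable (fun ω => U ω i) P)
    (hint2 : ∀ i j, Integrable (fun ω => U ω i * U ω j) P)
    (hmean : ∀ i, ∫ ω, U ω i ∂P = m i)
    (hcov : ∀ i j, ∫ ω, (U ω i - m i) * (U ω j - m j) ∂P = S i j) (A : Matrix ι ι ℝ)
    (c : ι → ℝ) :
    ∫ ω, (U ω - c) ⬝ᵥ A *ᵥ (U ω - c) ∂P = trace (A * Sᵀ) + (m - c) ⬝ᵥ A *ᵥ (m - c) := by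
  have hint_entry : ∀ i j, Integrable (fun ω => A i j * ((U ω i - c i) * (U ω j - c j))) P :=
    fun i j => (integrable_sub_mul_sub hint hint2 i j _ _).const_mul _
  simp_rw [dotProduct_mulVec_eq_sum_sum, Pi.sub_apply]
  rw [integral_finsetSum _ fun i _ => integrable_finsetSum _ fun j _ => hint_entry i j]
  simp_rw [integral_finsetSum _ fun j _ => hint_entry _ j, integral_const_mul,
    integral_sub_mul_sub hint hint2 hmean hcov, mul_add, Finset.sum_add_distrib]
  simp [trace, mul_apply]

end Moments

theorem method3_expected_loglikelihood_general
    (n q : ℕ) (M₀ M₁ : Matrix (Fin n) (Fin n) ℝ)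
    (N₀ N₁ : Matrix (Fin n) (Fin q) ℝ) (z : Fin q → ℝ)
    (S : Matrix (Fin n) (Fin n) ℝ) (hS : S.PosDef)
    (Vbar : Fin n → ℝ)
    (hstat : M₀.mulVec Vbar + N₀.mulVec z = 0)
    (μ : ℝ) (Mμ : Matrix (Fin n) (Fin n) ℝ) (hMμ : Mμ = M₀ + μ • M₁)
    (hMμsymm : Mμ.IsSymm) (hMμinv : IsUnit Mμ.det)
    (Vμ : Fin n → ℝ) (hVμ : Vμ = -(Mμ⁻¹.mulVec ((N₀ + μ • N₁).mulVec z)))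
    {Ω : Type*} [MeasurableSpace Ω] (P : Measure Ω) [IsProbabilityMeasure P]
    (U : Ω → Fin n → ℝ)
    (hint : ∀ i, Integrable (fun ω => U ω i) P)
    (hint2 : ∀ i j, Integrable (fun ω => U ω i * U ω j) P)
    (hmean : ∀ i, ∫ ω, U ω i ∂P = Vbar i)
    (hcov : ∀ i j, ∫ ω, (U ω i - Vbar i) * (U ω j - Vbar j) ∂P = S i j) :
    (∫ ω, dotProduct (U ω - Vμ) (S⁻¹.mulVec (U ω - Vμ)) ∂P =
        μ ^ 2 * dotProduct (M₁.mulVec Vbar + N₁.mulVec z)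
          ((Mμᵀ * S * Mμ)⁻¹.mulVec (M₁.mulVec Vbar + N₁.mulVec z)) + n) ∧
      ((n : ℝ) ≤ ∫ ω, dotProduct (U ω - Vμ) (S⁻¹.mulVec (U ω - Vμ)) ∂P) ∧
      (μ = 0 → ∫ ω, dotProduct (U ω - Vμ) (S⁻¹.mulVec (U ω - Vμ)) ∂P = n) := by
  set w := M₁ *ᵥ Vbar + N₁ *ᵥ z
  have hSsymm : Sᵀ = S := by
    simpa [conjTranspose_eq_transpose_of_trivial] using hS.isHermitian.eq
  have hbias : Vbar - Vμ = μ • Mμ⁻¹ *ᵥ w := by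
    subst hMμ
    rw [hVμ, sub_neg_eq_add, add_inv_mulVec_eq_smul_of_stationary hstat μ hMμinv]
  have hloss : ∫ ω, (U ω - Vμ) ⬝ᵥ S⁻¹ *ᵥ (U ω - Vμ) ∂P =
      (n : ℝ) + (Vbar - Vμ) ⬝ᵥ S⁻¹ *ᵥ (Vbar - Vμ) := by
    rw [integral_dotProduct_mulVec_sub hint hint2 hmean hcov, hSsymm,
      nonsing_inv_mul _ ((isUnit_iff_isUnit_det S).mp hS.isUnit), trace_one, Fintype.card_fin]
  have hbias_nonneg : 0 ≤ (Vbar - Vμ) ⬝ᵥ S⁻¹ *ᵥ (Vbar - Vμ) := by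
    simpa using hS.inv.posSemidef.dotProduct_mulVec_nonneg (Vbar - Vμ)
  have hMμinvT : Mμ⁻¹ᵀ = Mμ⁻¹ := by rw [transpose_nonsing_inv, hMμsymm.eq]
  have hbias_eq :
      (Vbar - Vμ) ⬝ᵥ S⁻¹ *ᵥ (Vbar - Vμ) = μ ^ 2 * (w ⬝ᵥ (Mμᵀ * S * Mμ)⁻¹ *ᵥ w) := by
    rw [hbias, smul_dotProduct_mulVec_smul, dotProduct_inv_conj_mulVec, hMμinvT]
  refine ⟨by rw [hloss, hbias_eq, add_comm], by linarith, fun hμ => ?_⟩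
  rw [hloss, hbias_eq, hμ]
  ring

/-- Claim 1 in the proof of Theorem 1: with `V̄ = −M₀⁻¹ N₀ z`,
`M_μ = M₀ + μ M₁`, `V_μ = −M_μ⁻¹ (N₀ + μ N₁) z`, and a random vector `U`
with mean `V̄` and covariance `Σ`,
`E[(U − V_μ)ᵀ Σ⁻¹ (U − V_μ)] = μ² ‖M₁ V̄ + N₁ z‖_{(M_μᵀ Σ M_μ)⁻¹} + n ≥ n`,
with equality when `μ = 0`. -/
theorem method3_expected_loglikelihood
    (n q : ℕ) (M₀ M₁ : Matrix (Fin n) (Fin n) ℝ)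
    (hM₀symm : M₀.IsSymm) (hM₀inv : IsUnit M₀.det)
    (N₀ N₁ : Matrix (Fin n) (Fin q) ℝ) (z : Fin q → ℝ)
    (S : Matrix (Fin n) (Fin n) ℝ) (hS : S.PosDef)
    (Vbar : Fin n → ℝ) (hVbar : Vbar = -(M₀⁻¹.mulVec (N₀.mulVec z)))
    (hstat : M₀.mulVec Vbar + N₀.mulVec z = 0)
    (μ : ℝ) (Mμ : Matrix (Fin n) (Fin n) ℝ) (hMμ : Mμ = M₀ + μ • M₁)
    (hMμsymm : Mμ.IsSymm) (hMμinv : IsUnit Mμ.det)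
    (Vμ : Fin n → ℝ) (hVμ : Vμ = -(Mμ⁻¹.mulVec ((N₀ + μ • N₁).mulVec z)))
    {Ω : Type*} [MeasurableSpace Ω] (P : Measure Ω) [IsProbabilityMeasure P]
    (U : Ω → Fin n → ℝ)
    (hint : ∀ i, Integrable (fun ω => U ω i) P)
    (hint2 : ∀ i j, Integrable (fun ω => U ω i * U ω j) P)
    (hmean : ∀ i, ∫ ω, U ω i ∂P = Vbar i)
    (hcov : ∀ i j, ∫ ω, (U ω i - Vbar i) * (U ω j - Vbar j) ∂P = S i j) :
    (∫ ω, dotProduct (U ω - Vμ) (S⁻¹.mulVec (U ω - Vμ)) ∂P =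
        μ ^ 2 * dotProduct (M₁.mulVec Vbar + N₁.mulVec z)
          ((Mμᵀ * S * Mμ)⁻¹.mulVec (M₁.mulVec Vbar + N₁.mulVec z)) + n) ∧
      ((n : ℝ) ≤ ∫ ω, dotProduct (U ω - Vμ) (S⁻¹.mulVec (U ω - Vμ)) ∂P) ∧
      (μ = 0 → ∫ ω, dotProduct (U ω - Vμ) (S⁻¹.mulVec (U ω - Vμ)) ∂P = n) :=
  method3_expected_loglikelihood_general n q M₀ M₁ N₀ N₁ z S hS Vbar hstat μ Mμ hMμ hMμsymm hMμinv
    Vμ hVμ P U hint hint2 hmean hcov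
end

section
/- Let M₀ : Matrix (Fin n) (Fin n) ℝ be symmetric and invertible, N₀ : Matrix (Fin n) (Fin q) ℝ, z : Fin q → ℝ, and Σ : Matrix (Fin n) (Fin n) ℝ positive definite. Set V̄ = −M₀⁻¹·(N₀·z). Let (Ω, P) be a probability space and U : Ω → (Fin n → ℝ) a random vector with integrable components and pairwise products, mean V̄, and covariance matrix Σ. Then for every μ : ℝ with 1 + μ ≠ 0, the matrix (1+μ)·M₀ is invertible, V_μ := −((1+μ)·M₀)⁻¹·(((1+μ)·N₀)·z) equals V̄, and E[(U − V_μ)ᵀ Σ⁻¹ (U − V_μ)] = n, a value independent of μ. -/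
open Matrix MeasureTheory

/-!
Scaling `M₀` and `N₀` by the same nonzero factor cancels in `-M⁻¹ (N z)`, so `V_μ = V̄`.
The expected quadratic form is then `E[Xᵀ A X] = tr (A E[X Xᵀ])` with `X = U - V̄`,
`A = Σ⁻¹` and `E[X Xᵀ] = Σ`, i.e. `tr 1 = n`.
-/

theorem Matrix.inv_smul_of_ne_zero {ι K : Type*} [Fintype ι] [DecidableEq ι] [Field K]
    {c : K} (hc : c ≠ 0) (M : Matrix ι ι K) : (c • M)⁻¹ = c⁻¹ • M⁻¹ := by
  by_cases hM : IsUnit M.det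
  · let := invertibleOfNonzero hc
    rw [inv_smul M c hM, invOf_eq_inv]
  · have hcM : ¬IsUnit (c • M).det := by
      rwa [det_smul, IsUnit.mul_iff, not_and_or, or_iff_right (not_not.mpr ((Ne.isUnit hc).pow _))]
    rw [nonsing_inv_apply_not_isUnit _ hcM, nonsing_inv_apply_not_isUnit _ hM, smul_zero]

theorem Matrix.smul_inv_mulVec_smul_mulVec {ι κ K : Type*} [Fintype ι] [DecidableEq ι]
    [Fintype κ] [Field K] {c : K} (hc : c ≠ 0) (M : Matrix ι ι K) (N : Matrix ι κ K)
    (z : κ → K) : (c • M)⁻¹ *ᵥ ((c • N) *ᵥ z) = M⁻¹ *ᵥ (N *ᵥ z) := by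
  rw [inv_smul_of_ne_zero hc, smul_mulVec, smul_mulVec, mulVec_smul, smul_smul,
    inv_mul_cancel₀ hc, one_smul]

section Moments

variable {Ω : Type*} [MeasurableSpace Ω] {P : Measure Ω}

theorem MeasureTheory.Integrable.sub_const_mul_sub_const [IsFiniteMeasure P] {f g : Ω → ℝ}
    (hf : Integrable f P) (hg : Integrable g P) (hfg : Integrable (fun ω => f ω * g ω) P)
    (a b : ℝ) : Integrable (fun ω => (f ω - a) * (g ω - b)) P := by
  have h : (fun ω => (f ω - a) * (g ω - b))
      = fun ω => f ω * g ω - a * g ω - f ω * b + a * b := by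
    funext ω; ring
  rw [h]
  exact (((hfg.sub (hg.const_mul a)).sub (hf.mul_const b))).add (integrable_const _)

noncomputable def secondMomentMatrix {ι : Type*} (X : Ω → ι → ℝ) (P : Measure Ω) :
    Matrix ι ι ℝ :=
  of fun i j => ∫ ω, X ω i * X ω j ∂P

theorem integral_dotProduct_mulVec {ι : Type*} [Fintype ι] (A : Matrix ι ι ℝ)
    {X : Ω → ι → ℝ} (hX : ∀ i j, Integrable (fun ω => X ω i * X ω j) P) :
    ∫ ω, X ω ⬝ᵥ A *ᵥ X ω ∂P = (A * secondMomentMatrix X P).trace := by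
  have hpt : ∀ ω, X ω ⬝ᵥ A *ᵥ X ω = ∑ i, ∑ j, A i j * (X ω j * X ω i) := fun ω => by
    simp only [dotProduct, mulVec, Finset.mul_sum]
    exact Finset.sum_congr rfl fun i _ => Finset.sum_congr rfl fun j _ => by ring
  rw [integral_congr_ae (Filter.Eventually.of_forall hpt),
    integral_finsetSum (f := fun i ω => ∑ j, A i j * (X ω j * X ω i)) _
      fun i _ => integrable_finsetSum _ fun j _ => (hX j i).const_mul _]
  refine Finset.sum_congr rfl fun i _ => ?_
  rw [integral_finsetSum (f := fun j ω => A i j * (X ω j * X ω i)) _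
    fun j _ => (hX j i).const_mul _]
  exact Finset.sum_congr rfl fun j _ => integral_const_mul _ _

end Moments

theorem method3_scale_invariance_general
    (n q : ℕ) (M₀ : Matrix (Fin n) (Fin n) ℝ)
    (hM₀inv : IsUnit M₀.det)
    (N₀ : Matrix (Fin n) (Fin q) ℝ) (z : Fin q → ℝ)
    (S : Matrix (Fin n) (Fin n) ℝ) (hS : S.PosDef)
    (Vbar : Fin n → ℝ) (hVbar : Vbar = -(M₀⁻¹.mulVec (N₀.mulVec z)))
    {Ω : Type*} [MeasurableSpace Ω] (P : Measure Ω) [IsProbabilityMeasure P]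
    (U : Ω → Fin n → ℝ)
    (hint : ∀ i, Integrable (fun ω => U ω i) P)
    (hint2 : ∀ i j, Integrable (fun ω => U ω i * U ω j) P)
    (hcov : ∀ i j, ∫ ω, (U ω i - Vbar i) * (U ω j - Vbar j) ∂P = S i j) :
    ∀ μ : ℝ, 1 + μ ≠ 0 →
      IsUnit ((1 + μ) • M₀).det ∧
      -(((1 + μ) • M₀)⁻¹.mulVec (((1 + μ) • N₀).mulVec z)) = Vbar ∧
      ∫ ω, dotProduct (U ω - -(((1 + μ) • M₀)⁻¹.mulVec (((1 + μ) • N₀).mulVec z)))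
          (S⁻¹.mulVec
            (U ω - -(((1 + μ) • M₀)⁻¹.mulVec (((1 + μ) • N₀).mulVec z)))) ∂P
        = (n : ℝ) := by
  intro μ hμ
  have hV : -(((1 + μ) • M₀)⁻¹ *ᵥ (((1 + μ) • N₀) *ᵥ z)) = Vbar := by
    rw [smul_inv_mulVec_smul_mulVec hμ, hVbar]
  have hmoment : secondMomentMatrix (fun ω => U ω - Vbar) P = S := by
    ext i j
    exact hcov i j
  have hcentered : ∀ i j, Integrable (fun ω => (U ω - Vbar) i * (U ω - Vbar) j) P :=
    fun i j => (hint i).sub_const_mul_sub_const (hint j) (hint2 i j) (Vbar i) (Vbar j)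
  refine ⟨?_, hV, ?_⟩
  · rw [det_smul, Fintype.card_fin]
    exact ((Ne.isUnit hμ).pow n).mul hM₀inv
  · rw [hV, integral_dotProduct_mulVec _ hcentered, hmoment,
      nonsing_inv_mul S (isUnit_iff_ne_zero.mpr hS.det_pos.ne'), trace_one, Fintype.card_fin]

/-- Claim 2 in the proof of Theorem 1: for the perturbation direction equal to
the true parameter, i.e. `M_μ = (1+μ) M₀` and `N_μ = (1+μ) N₀`, every scaling
`1 + μ ≠ 0` yields `V_μ = V̄` and the same expected quadratic cost `n`. -/
theorem method3_scale_invariance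
    (n q : ℕ) (M₀ : Matrix (Fin n) (Fin n) ℝ)
    (hM₀symm : M₀.IsSymm) (hM₀inv : IsUnit M₀.det)
    (N₀ : Matrix (Fin n) (Fin q) ℝ) (z : Fin q → ℝ)
    (S : Matrix (Fin n) (Fin n) ℝ) (hS : S.PosDef)
    (Vbar : Fin n → ℝ) (hVbar : Vbar = -(M₀⁻¹.mulVec (N₀.mulVec z)))
    {Ω : Type*} [MeasurableSpace Ω] (P : Measure Ω) [IsProbabilityMeasure P]
    (U : Ω → Fin n → ℝ)
    (hint : ∀ i, Integrable (fun ω => U ω i) P)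
    (hint2 : ∀ i j, Integrable (fun ω => U ω i * U ω j) P)
    (hmean : ∀ i, ∫ ω, U ω i ∂P = Vbar i)
    (hcov : ∀ i j, ∫ ω, (U ω i - Vbar i) * (U ω j - Vbar j) ∂P = S i j) :
    ∀ μ : ℝ, 1 + μ ≠ 0 →
      IsUnit ((1 + μ) • M₀).det ∧
      -(((1 + μ) • M₀)⁻¹.mulVec (((1 + μ) • N₀).mulVec z)) = Vbar ∧
      ∫ ω, dotProduct (U ω - -(((1 + μ) • M₀)⁻¹.mulVec (((1 + μ) • N₀).mulVec z)))
          (S⁻¹.mulVec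
            (U ω - -(((1 + μ) • M₀)⁻¹.mulVec (((1 + μ) • N₀).mulVec z)))) ∂P
        = (n : ℝ) :=
  method3_scale_invariance_general n q M₀ hM₀inv N₀ z S hS Vbar hVbar P U hint hint2 hcov
end

section
/- Let M₀ : Matrix (Fin n) (Fin n) ℝ, N₀ : Matrix (Fin n) (Fin q) ℝ, V : Fin n → ℝ, z : Fin q → ℝ, with M₀·V + N₀·z = 0, and let Σ, Σ₀ be symmetric matrices of sizes n×n and q×q. Let (Ω, P) be a probability space and U : Ω → (Fin n → ℝ), x₀ : Ω → (Fin q → ℝ) random vectors with integrable components and pairwise products, such that U has mean V and covariance Σ, x₀ has mean z and covariance Σ₀, and U and x₀ are uncorrelated. Set t₀₀ = trace(M₀ᵀM₀Σ) + trace(N₀ᵀN₀Σ₀). Then for every μ : ℝ, E[‖((1+μ)·M₀)·U + ((1+μ)·N₀)·x₀‖²] = (1+μ)²·t₀₀, and if t₀₀ > 0 this expression has unique minimizer μ = −1, at which the corresponding parameter (1+μ)·θ̄ equals 0. -/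
open Matrix MeasureTheory

private lemma integral_sum_mul_sum {Ω : Type*} [MeasurableSpace Ω] (P : Measure Ω)
    {ι : Type*} [Fintype ι] (a b : ι → ℝ) (g : ι → Ω → ℝ)
    (hint : ∀ s t, Integrable (fun ω => g s ω * g t ω) P) :
    ∫ ω, (∑ s, a s * g s ω) * (∑ t, b t * g t ω) ∂P =
      ∑ s, ∑ t, a s * b t * ∫ ω, g s ω * g t ω ∂P := by
  have h : ∀ ω, (∑ s, a s * g s ω) * (∑ t, b t * g t ω)
      = ∑ s, ∑ t, a s * b t * (g s ω * g t ω) := by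
    intro ω
    rw [Finset.sum_mul_sum]
    exact Finset.sum_congr rfl fun s _ => Finset.sum_congr rfl fun t _ => by ring
  simp_rw [h]
  rw [integral_finset_sum]
  · refine Finset.sum_congr rfl fun s _ => ?_
    rw [integral_finset_sum _ fun t _ => (hint s t).const_mul _]
    exact Finset.sum_congr rfl fun t _ => integral_const_mul _ _
  · intro s _
    exact integrable_finset_sum _ fun t _ => (hint s t).const_mul _

/-- Result 2 of Theorem 2: with the perturbation direction equal to the true
parameter (`M₁ = M₀`, `N₁ = N₀`, i.e. `θ = (1+μ)θ̄`), the expected Method 1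
cost equals `(1+μ)² t₀₀`; if `t₀₀ > 0` it is uniquely minimized at `μ = −1`,
where the corresponding parameter `(1+μ)·θ̄` is `0` (Method 1 is not
scale-invariant). -/
theorem method1_not_scale_invariant
    (n q p : ℕ) (M₀ : Matrix (Fin n) (Fin n) ℝ)
    (N₀ : Matrix (Fin n) (Fin q) ℝ)
    (V : Fin n → ℝ) (z : Fin q → ℝ)
    (hstat : M₀.mulVec V + N₀.mulVec z = 0)
    (S : Matrix (Fin n) (Fin n) ℝ) (hSsymm : S.IsSymm)
    (S₀ : Matrix (Fin q) (Fin q) ℝ) (hS₀symm : S₀.IsSymm)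
    {Ω : Type*} [MeasurableSpace Ω] (P : Measure Ω) [IsProbabilityMeasure P]
    (U : Ω → Fin n → ℝ) (x₀ : Ω → Fin q → ℝ)
    (hintU : ∀ i, Integrable (fun ω => U ω i) P)
    (hintU2 : ∀ i j, Integrable (fun ω => U ω i * U ω j) P)
    (hintx : ∀ i, Integrable (fun ω => x₀ ω i) P)
    (hintx2 : ∀ i j, Integrable (fun ω => x₀ ω i * x₀ ω j) P)
    (hintUx : ∀ i j, Integrable (fun ω => U ω i * x₀ ω j) P)
    (hmeanU : ∀ i, ∫ ω, U ω i ∂P = V i)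
    (hcovU : ∀ i j, ∫ ω, (U ω i - V i) * (U ω j - V j) ∂P = S i j)
    (hmeanx : ∀ i, ∫ ω, x₀ ω i ∂P = z i)
    (hcovx : ∀ i j, ∫ ω, (x₀ ω i - z i) * (x₀ ω j - z j) ∂P = S₀ i j)
    (huncorr : ∀ i j, ∫ ω, (U ω i - V i) * (x₀ ω j - z j) ∂P = 0)
    (t₀₀ : ℝ)
    (ht₀₀ : t₀₀ = (M₀ᵀ * M₀ * S).trace + (N₀ᵀ * N₀ * S₀).trace)
    (θbar : Fin p → ℝ) :
    (∀ μ : ℝ,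
      ∫ ω, dotProduct (((1 + μ) • M₀).mulVec (U ω) + ((1 + μ) • N₀).mulVec (x₀ ω))
          (((1 + μ) • M₀).mulVec (U ω) + ((1 + μ) • N₀).mulVec (x₀ ω)) ∂P =
        (1 + μ) ^ 2 * t₀₀) ∧
    (0 < t₀₀ → ∀ μ : ℝ, μ ≠ -1 →
      (1 + (-1 : ℝ)) ^ 2 * t₀₀ < (1 + μ) ^ 2 * t₀₀) ∧
    (1 + (-1 : ℝ)) • θbar = 0 := by
  -- centered variables combined over `Fin n ⊕ Fin q`
  set g : (Fin n ⊕ Fin q) → Ω → ℝ :=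
    fun s ω => Sum.elim (fun j => U ω j - V j) (fun k => x₀ ω k - z k) s with hg
  set A : Fin n → (Fin n ⊕ Fin q) → ℝ :=
    fun i => Sum.elim (fun j => M₀ i j) (fun k => N₀ i k) with hA
  have hgUU : ∀ j l : Fin n, Integrable (fun ω => (U ω j - V j) * (U ω l - V l)) P := by
    intro j l
    have h : (fun ω => (U ω j - V j) * (U ω l - V l))
        = fun ω => U ω j * U ω l - V j * U ω l - V l * U ω j + V j * V l := by
      funext ω; ring
    rw [h]
    exact (((hintU2 j l).sub ((hintU l).const_mul _)).sub
      ((hintU j).const_mul _)).add (integrable_const _)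
  have hgUx : ∀ (j : Fin n) (k : Fin q),
      Integrable (fun ω => (U ω j - V j) * (x₀ ω k - z k)) P := by
    intro j k
    have h : (fun ω => (U ω j - V j) * (x₀ ω k - z k))
        = fun ω => U ω j * x₀ ω k - V j * x₀ ω k - z k * U ω j + V j * z k := by
      funext ω; ring
    rw [h]
    exact (((hintUx j k).sub ((hintx k).const_mul _)).sub
      ((hintU j).const_mul _)).add (integrable_const _)
  have hgxx : ∀ k l : Fin q, Integrable (fun ω => (x₀ ω k - z k) * (x₀ ω l - z l)) P := by
    intro k l
    have h : (fun ω => (x₀ ω k - z k) * (x₀ ω l - z l))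
        = fun ω => x₀ ω k * x₀ ω l - z k * x₀ ω l - z l * x₀ ω k + z k * z l := by
      funext ω; ring
    rw [h]
    exact (((hintx2 k l).sub ((hintx l).const_mul _)).sub
      ((hintx k).const_mul _)).add (integrable_const _)
  have hint : ∀ s t, Integrable (fun ω => g s ω * g t ω) P := by
    rintro (j | k) (l | m)
    · exact hgUU j l
    · exact hgUx j m
    · have h : (fun ω => g (Sum.inr k) ω * g (Sum.inl l) ω)
          = fun ω => (U ω l - V l) * (x₀ ω k - z k) := by
        funext ω; simp [hg]; ring
      rw [h]; exact hgUx l k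
    · exact hgxx k m
  have hC : ∀ s t, (∫ ω, g s ω * g t ω ∂P) =
      Sum.elim (fun j => Sum.elim (fun l => S j l) (fun _ => (0:ℝ)))
        (fun k => Sum.elim (fun l => (0:ℝ)) (fun m => S₀ k m)) s t := by
    rintro (j | k) (l | m)
    · exact hcovU j l
    · exact huncorr j m
    · have h : (fun ω => g (Sum.inr k) ω * g (Sum.inl l) ω)
          = fun ω => (U ω l - V l) * (x₀ ω k - z k) := by
        funext ω; simp [hg]; ring
      simpa [h] using huncorr l k
    · exact hcovx k m
  -- the residual written with centered variables
  have hres : ∀ (ω : Ω) (i : Fin n),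
      (M₀.mulVec (U ω) + N₀.mulVec (x₀ ω)) i = ∑ s, A i s * g s ω := by
    intro ω i
    have h0 : (M₀.mulVec V + N₀.mulVec z) i = 0 := by rw [hstat]; rfl
    simp only [Pi.add_apply, mulVec, dotProduct] at h0 ⊢
    rw [Fintype.sum_sum_type]
    simp only [hA, hg, Sum.elim_inl, Sum.elim_inr]
    simp only [mul_sub, Finset.sum_sub_distrib]
    linarith
  have hmain : ∀ μ : ℝ,
      ∫ ω, dotProduct (((1 + μ) • M₀).mulVec (U ω) + ((1 + μ) • N₀).mulVec (x₀ ω))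
          (((1 + μ) • M₀).mulVec (U ω) + ((1 + μ) • N₀).mulVec (x₀ ω)) ∂P =
        (1 + μ) ^ 2 * t₀₀ := by
    intro μ
    have hpt : ∀ ω, dotProduct (((1 + μ) • M₀).mulVec (U ω) + ((1 + μ) • N₀).mulVec (x₀ ω))
          (((1 + μ) • M₀).mulVec (U ω) + ((1 + μ) • N₀).mulVec (x₀ ω)) =
        (1 + μ) ^ 2 * ∑ i, (∑ s, A i s * g s ω) * (∑ t, A i t * g t ω) := by
      intro ω
      have h1 : ((1 + μ) • M₀).mulVec (U ω) + ((1 + μ) • N₀).mulVec (x₀ ω)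
          = (1 + μ) • (M₀.mulVec (U ω) + N₀.mulVec (x₀ ω)) := by
        rw [smul_add, smul_mulVec, smul_mulVec]
      rw [h1, dotProduct, Finset.mul_sum]
      refine Finset.sum_congr rfl fun i _ => ?_
      rw [← hres ω i]
      simp [Pi.smul_apply]
      ring
    simp_rw [hpt]
    rw [integral_const_mul]
    congr 1
    rw [integral_finset_sum _ (fun i _ => by
      have h : ∀ ω, (∑ s, A i s * g s ω) * (∑ t, A i t * g t ω)
          = ∑ s, ∑ t, A i s * A i t * (g s ω * g t ω) := by
        intro ω
        rw [Finset.sum_mul_sum]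
        exact Finset.sum_congr rfl fun s _ => Finset.sum_congr rfl fun t _ => by ring
      simp_rw [h]
      exact integrable_finset_sum _ fun s _ =>
        integrable_finset_sum _ fun t _ => (hint s t).const_mul _)]
    simp_rw [integral_sum_mul_sum P _ _ g hint]
    simp_rw [hC]
    rw [ht₀₀]
    simp only [Fintype.sum_sum_type, Sum.elim_inl, Sum.elim_inr, hA,
      mul_zero, Finset.sum_const_zero, add_zero, zero_add]
    rw [Finset.sum_add_distrib]
    congr 1
    · rw [Matrix.trace]
      simp only [Matrix.diag_apply, Matrix.mul_apply, Matrix.transpose_apply,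
        Finset.sum_mul]
      rw [Finset.sum_comm]
      refine Finset.sum_congr rfl fun i _ => ?_
      rw [Finset.sum_comm]
      refine Finset.sum_congr rfl fun s _ => Finset.sum_congr rfl fun t _ => ?_
      exact congrArg _ (hSsymm.apply _ _)
    · rw [Matrix.trace]
      simp only [Matrix.diag_apply, Matrix.mul_apply, Matrix.transpose_apply,
        Finset.sum_mul]
      rw [Finset.sum_comm]
      refine Finset.sum_congr rfl fun i _ => ?_
      rw [Finset.sum_comm]
      refine Finset.sum_congr rfl fun s _ => Finset.sum_congr rfl fun t _ => ?_
      exact congrArg _ (hS₀symm.apply _ _)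
  refine ⟨hmain, fun ht μ hμ => ?_, by norm_num⟩
  have h1 : (1 + μ) ≠ 0 := fun h => hμ (by linarith)
  have h2 : (0:ℝ) < (1 + μ) ^ 2 := by positivity
  have h3 : (1 + (-1:ℝ)) ^ 2 = 0 := by norm_num
  rw [h3, zero_mul]
  exact mul_pos h2 ht
end

section
/- Let c : ℕ, p⁰ : ℝ, and p, p̃ : Fin c → ℝ be such that p j ≤ p̃ j for all j (the p̃ j are upper bounds) and p̃ is antitone (j ≤ j' implies p̃ j' ≤ p̃ j, i.e., the candidates are sorted by decreasing upper bound). Let k : Fin c and define M = max(p⁰, max_{j < k} p j) (the best value found before step k). If p̃ k ≤ M, then M = max(p⁰, max_{j : Fin c} p j); that is, stopping the enumeration at step k returns the global maximum over all candidates. -/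
/-- Correctness of the stopping criterion of Algorithm 1: if the candidate
values `p j` are bounded by antitone (sorted decreasing) upper bounds `p̃ j`,
and at step `k` the next upper bound `p̃ k` does not exceed the best value
`M = max(p⁰, max_{j < k} p j)` found so far, then `M` is the global maximum
`max(p⁰, max_j p j)` over all candidates. -/
theorem branch_and_bound_stopping_criterion
    (c : ℕ) (p0 : ℝ) (p ptil : Fin c → ℝ)
    (hub : ∀ j, p j ≤ ptil j)
    (hanti : ∀ j j' : Fin c, j ≤ j' → ptil j' ≤ ptil j)
    (k : Fin c) (M : ℝ)
    (hM : M = sSup ({p0} ∪ p '' {j : Fin c | j < k}))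
    (hstop : ptil k ≤ M) :
    M = sSup ({p0} ∪ Set.range p) := by
  have hAfin : ({p0} ∪ p '' {j : Fin c | j < k} : Set ℝ).Finite :=
    (Set.finite_singleton p0).union ((Set.toFinite _).image p)
  have hBfin : ({p0} ∪ Set.range p : Set ℝ).Finite :=
    (Set.finite_singleton p0).union (Set.finite_range p)
  have hAsub : ({p0} ∪ p '' {j : Fin c | j < k} : Set ℝ) ⊆ {p0} ∪ Set.range p := by
    apply Set.union_subset_union_right
    exact Set.image_subset_range p _
  have hle : M ≤ sSup ({p0} ∪ Set.range p) := by
    rw [hM]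
    exact csSup_le_csSup hBfin.bddAbove (by simp) hAsub
  refine le_antisymm hle ?_
  apply csSup_le (by simp)
  rintro x (rfl | ⟨j, rfl⟩)
  · exact hM ▸ le_csSup hAfin.bddAbove (Or.inl rfl)
  · rcases lt_or_ge j k with h | h
    · exact hM ▸ le_csSup hAfin.bddAbove (Or.inr ⟨j, h, rfl⟩)
    · exact (hub j).trans ((hanti k j h).trans hstop)
end
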